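/- Let f be twice differentiable on an open interval containing [a,b] with |f''|^q convex on [a,b] for some q > 1, and let p = q/(q−1). Then |f((a+b)/2) − (1/(b−a))∫ₐᵇ f(x) dx| ≤ ((b−a)²/16)·(1/(2p+1))^{1/p}·{ [(|f''((a+b)/2)|^q + |f''(a)|^q)/2]^{1/q} + [(|f''((a+b)/2)|^q + |f''(b)|^q)/2]^{1/q} }. -/

import Mathlib

/-!
With `m = (a + b) / 2`, integrating by parts twice on `[a, m]` and on `[m, b]` gives
`f m - (1 / (b - a)) ∫ₐᵇ f = -(∫ₐᵐ (x - a)² f'' + ∫ₘᵇ (x - b)² f'') / (2 (b - a))`.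
On each half, Hölder's inequality bounds the integral by the `Lᵖ` norm of the weight, which is
explicit, times `(∫ |f''|^q)^(1/q)`; and since `|f''|^q` is convex it lies below its chord, so
`∫ |f''|^q` is at most the half-length times the mean of its values at the two endpoints
(the right half of the Hermite–Hadamard inequality).
-/

open MeasureTheory Set intervalIntegral

theorem integral_sub_sq_mul_eq {f f' f'' : ℝ → ℝ} {c d e : ℝ}
    (hf' : ∀ x ∈ uIcc c d, HasDerivAt f (f' x) x)
    (hf'' : ∀ x ∈ uIcc c d, HasDerivAt f' (f'' x) x)
    (hint : IntervalIntegrable f'' volume c d) :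
    ∫ x in c..d, (x - e) ^ 2 * f'' x =
      (d - e) ^ 2 * f' d - (c - e) ^ 2 * f' c - 2 * ((d - e) * f d - (c - e) * f c) +
        2 * ∫ x in c..d, f x := by
  have hF : ∀ x ∈ uIcc c d, HasDerivAt (fun y ↦ (y - e) ^ 2 * f' y - 2 * ((y - e) * f y))
      ((x - e) ^ 2 * f'' x - 2 * f x) x := by
    intro x hx
    have hx' := (hasDerivAt_id' x).sub_const e
    exact ((hx'.fun_pow 2).fun_mul (hf'' x hx)).fun_sub ((hx'.fun_mul (hf' x hx)).const_mul 2)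
      |>.congr_deriv (by ring)
  have hfi : IntervalIntegrable f volume c d := (HasDerivAt.continuousOn hf').intervalIntegrable
  have hwi : IntervalIntegrable (fun x ↦ (x - e) ^ 2 * f'' x) volume c d :=
    hint.continuousOn_mul (by fun_prop)
  have hftc := integral_eq_sub_of_hasDerivAt hF (hwi.sub (hfi.const_mul 2))
  rw [intervalIntegral.integral_sub hwi (hfi.const_mul 2),
    intervalIntegral.integral_const_mul] at hftc
  linarith

theorem midpoint_sub_average_eq {f f' f'' : ℝ → ℝ} {a b : ℝ} (hab : a < b)
    (hf' : ∀ x ∈ Icc a b, HasDerivAt f (f' x) x)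
    (hf'' : ∀ x ∈ Icc a b, HasDerivAt f' (f'' x) x)
    (hint : IntervalIntegrable f'' volume a b) :
    f ((a + b) / 2) - 1 / (b - a) * ∫ x in a..b, f x =
      -((∫ x in a..(a + b) / 2, (x - a) ^ 2 * f'' x) +
          ∫ x in (a + b) / 2..b, (x - b) ^ 2 * f'' x) / (2 * (b - a)) := by
  set m := (a + b) / 2 with hm_eq
  have hm : m ∈ Icc a b := ⟨by linarith, by linarith⟩
  have hl : uIcc a m ⊆ Icc a b := uIcc_subset_Icc (left_mem_Icc.2 hab.le) hm
  have hr : uIcc m b ⊆ Icc a b := uIcc_subset_Icc hm (right_mem_Icc.2 hab.le)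
  rw [integral_sub_sq_mul_eq (fun x hx ↦ hf' x (hl hx)) (fun x hx ↦ hf'' x (hl hx))
      (hint.mono_set (uIcc_of_le hab.le ▸ hl)),
    integral_sub_sq_mul_eq (fun x hx ↦ hf' x (hr hx)) (fun x hx ↦ hf'' x (hr hx))
      (hint.mono_set (uIcc_of_le hab.le ▸ hr)),
    ← integral_add_adjacent_intervals
      (HasDerivAt.continuousOn fun x hx ↦ hf' x (hl hx)).intervalIntegrable
      (HasDerivAt.continuousOn fun x hx ↦ hf' x (hr hx)).intervalIntegrable]
  have : b - a ≠ 0 := by linarith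
  field_simp
  ring

theorem ConvexOn.intervalIntegral_le_trapezoid {φ : ℝ → ℝ} {c d : ℝ}
    (hφ : ConvexOn ℝ (Icc c d) φ) (hcd : c ≤ d) (hint : IntervalIntegrable φ volume c d) :
    ∫ x in c..d, φ x ≤ (d - c) * ((φ c + φ d) / 2) := by
  rcases hcd.eq_or_lt with rfl | hcd
  · simp
  have hdc : 0 < d - c := sub_pos.2 hcd
  have chord : ∀ x ∈ Icc c d, φ x ≤ (d - x) / (d - c) * φ c + (x - c) / (d - c) * φ d := by
    intro x hx
    have key := hφ.2 (left_mem_Icc.2 hcd.le) (right_mem_Icc.2 hcd.le)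
      (div_nonneg (sub_nonneg.2 hx.2) hdc.le) (div_nonneg (sub_nonneg.2 hx.1) hdc.le)
      (by field_simp; ring)
    rwa [smul_eq_mul, smul_eq_mul, smul_eq_mul, smul_eq_mul, div_mul_eq_mul_div,
      div_mul_eq_mul_div, ← add_div, show (d - x) * c + (x - c) * d = x * (d - c) by ring,
      mul_div_cancel_right₀ _ hdc.ne'] at key
  calc ∫ x in c..d, φ x
      ≤ ∫ x in c..d, ((d - x) / (d - c) * φ c + (x - c) / (d - c) * φ d) :=
        integral_mono_on hcd.le hint (Continuous.intervalIntegrable (by fun_prop) c d) chord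
    _ = (d - c) * ((φ c + φ d) / 2) := by
        rw [intervalIntegral.integral_add (Continuous.intervalIntegrable (by fun_prop) c d)
          (Continuous.intervalIntegrable (by fun_prop) c d)]
        simp only [intervalIntegral.integral_mul_const, intervalIntegral.integral_div,
          integral_comp_sub_left (fun x ↦ x), integral_comp_sub_right (fun x ↦ x), integral_id]
        field_simp
        ring

theorem integral_abs_mul_abs_le_of_convexOn {p q c d : ℝ} {w g : ℝ → ℝ}
    (hpq : p.HolderConjugate q) (hcd : c ≤ d) (hw : ContinuousOn w (Icc c d))
    (hg : AEStronglyMeasurable g (volume.restrict (Ioc c d)))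
    (hconv : ConvexOn ℝ (Icc c d) fun x ↦ |g x| ^ q) :
    ∫ x in c..d, |w x| * |g x| ≤
      (∫ x in c..d, |w x| ^ p) ^ (1 / p) *
        ((d - c) * ((|g c| ^ q + |g d| ^ q) / 2)) ^ (1 / q) := by
  have hq : 0 < q := hpq.symm.pos
  obtain ⟨C, hC⟩ := isCompact_Icc.exists_bound_of_continuousOn hw
  have hwLp : MemLp w (ENNReal.ofReal p) (volume.restrict (Ioc c d)) :=
    .of_bound ((hw.mono Ioc_subset_Icc_self).aestronglyMeasurable measurableSet_Ioc) C
      (ae_restrict_of_forall_mem measurableSet_Ioc fun x hx ↦ hC x (Ioc_subset_Icc_self hx))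
  have hgLp : MemLp g (ENNReal.ofReal q) (volume.restrict (Ioc c d)) := by
    refine .of_bound hg (max (|g c| ^ q) (|g d| ^ q) ^ (1 / q))
      (ae_restrict_of_forall_mem measurableSet_Ioc fun x hx ↦ ?_)
    rw [Real.norm_eq_abs, ← Real.rpow_rpow_inv (abs_nonneg (g x)) hq.ne', ← one_div]
    gcongr
    exact hconv.le_max_of_mem_Icc (left_mem_Icc.2 hcd) (right_mem_Icc.2 hcd)
      (Ioc_subset_Icc_self hx)
  have hgq : IntervalIntegrable (fun x ↦ |g x| ^ q) volume c d := by
    have h := hgLp.integrable_norm_rpow (by simpa using hq) (by simp)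
    simp only [Real.norm_eq_abs, ENNReal.toReal_ofReal hq.le] at h
    exact (intervalIntegrable_iff_integrableOn_Ioc_of_le hcd).2 h
  calc ∫ x in c..d, |w x| * |g x|
      ≤ (∫ x in c..d, |w x| ^ p) ^ (1 / p) * (∫ x in c..d, |g x| ^ q) ^ (1 / q) := by
        simpa only [integral_of_le hcd, Real.norm_eq_abs] using
          integral_mul_norm_le_Lp_mul_Lq hpq hwLp hgLp
    _ ≤ _ := by
        have hw0 : 0 ≤ ∫ x in c..d, |w x| ^ p := integral_nonneg hcd fun x _ ↦ by positivity
        have hg0 : 0 ≤ ∫ x in c..d, |g x| ^ q := integral_nonneg hcd fun x _ ↦ by positivity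
        gcongr
        exact hconv.intervalIntegral_le_trapezoid hcd hgq

theorem integral_sq_rpow {L p : ℝ} (hL : 0 ≤ L) (hp : -1 < 2 * p) :
    ∫ y in 0..L, (y ^ 2) ^ p = L ^ (2 * p + 1) / (2 * p + 1) := by
  have h : EqOn (fun y : ℝ ↦ (y ^ 2) ^ p) (fun y ↦ y ^ (2 * p)) (uIcc 0 L) := fun y hy ↦ by
    rw [uIcc_of_le hL] at hy
    dsimp only
    rw [← Real.rpow_natCast, ← Real.rpow_mul hy.1]
    norm_num
  rw [integral_congr h, integral_rpow (.inl hp), Real.zero_rpow (by linarith)]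
  ring

theorem integral_abs_sub_sq_rpow {c d e p : ℝ} (hcd : c ≤ d) (he : e = c ∨ e = d)
    (hp : -1 < 2 * p) :
    ∫ x in c..d, |(x - e) ^ 2| ^ p = (d - c) ^ (2 * p + 1) / (2 * p + 1) := by
  simp only [abs_sq]
  rcases he with rfl | rfl
  · rw [integral_comp_sub_right (fun y ↦ (y ^ 2) ^ p), sub_self,
      integral_sq_rpow (sub_nonneg.2 hcd) hp]
  · simp_rw [← neg_sub e, neg_sq]
    rw [integral_comp_sub_left (fun y ↦ (y ^ 2) ^ p), sub_self,
      integral_sq_rpow (sub_nonneg.2 hcd) hp]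

theorem abs_integral_sub_sq_mul_le {p q c d e : ℝ} {g : ℝ → ℝ} (hpq : p.HolderConjugate q)
    (hcd : c ≤ d) (he : e = c ∨ e = d) (hg : AEStronglyMeasurable g (volume.restrict (Ioc c d)))
    (hconv : ConvexOn ℝ (Icc c d) fun x ↦ |g x| ^ q) :
    |∫ x in c..d, (x - e) ^ 2 * g x| ≤
      (d - c) ^ 3 * (1 / (2 * p + 1)) ^ (1 / p) * ((|g c| ^ q + |g d| ^ q) / 2) ^ (1 / q) := by
  calc |∫ x in c..d, (x - e) ^ 2 * g x|
      ≤ ∫ x in c..d, |(x - e) ^ 2| * |g x| :=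
        (abs_integral_le_integral_abs hcd).trans_eq (integral_congr fun x _ ↦ abs_mul _ _)
    _ ≤ _ := integral_abs_mul_abs_le_of_convexOn hpq hcd (by fun_prop) hg hconv
    _ = _ := by
        have hp := hpq.pos
        have hexp : (2 * p + 1) * (1 / p) + 1 / q = 3 := by
          have := hpq.inv_add_inv_eq_one
          field_simp at this ⊢
          linarith
        have hdc : 0 ≤ d - c := sub_nonneg.2 hcd
        rw [integral_abs_sub_sq_rpow hcd he (by linarith), div_eq_mul_one_div ((d - c) ^ _),
          Real.mul_rpow (by positivity) (by positivity), Real.mul_rpow hdc (by positivity),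
          ← Real.rpow_mul hdc, mul_mul_mul_comm, ← Real.rpow_add' hdc (by rw [hexp]; norm_num),
          hexp, mul_assoc]
        norm_cast

theorem stmt_14 (f f' f'' : ℝ → ℝ) (a b q p : ℝ) (hab : a < b) (hq : 1 < q)
    (hpq : p = q / (q - 1))
    (hf' : ∀ x ∈ Set.Icc a b, HasDerivAt f (f' x) x)
    (hf'' : ∀ x ∈ Set.Icc a b, HasDerivAt f' (f'' x) x)
    (hint : IntervalIntegrable f'' MeasureTheory.volume a b)
    (hconv : ∀ x ∈ Set.Icc a b, ∀ y ∈ Set.Icc a b, ∀ t ∈ Set.Icc (0:ℝ) 1,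
      |f'' (t * x + (1 - t) * y)| ^ q ≤ t * |f'' x| ^ q + (1 - t) * |f'' y| ^ q) :
    |f ((a + b) / 2) - (1 / (b - a)) * ∫ u in a..b, f u| ≤
      (b - a) ^ 2 / 16 * (1 / (2 * p + 1)) ^ (1 / p) *
        (((|f'' ((a + b) / 2)| ^ q + |f'' a| ^ q) / 2) ^ (1 / q)
          + ((|f'' ((a + b) / 2)| ^ q + |f'' b| ^ q) / 2) ^ (1 / q)) := by
  have hpq' : p.HolderConjugate q := ((Real.holderConjugate_iff_eq_conjExponent hq).2 hpq).symm
  have hconvOn : ConvexOn ℝ (Icc a b) fun x ↦ |f'' x| ^ q :=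
    ⟨convex_Icc a b, fun x hx y hy s t hs _ hst ↦ by
      obtain rfl : t = 1 - s := by linarith
      exact hconv x hx y hy s ⟨hs, by linarith⟩⟩
  set m := (a + b) / 2 with hm
  have ham : a ≤ m := by linarith
  have hmb : m ≤ b := by linarith
  have hmeas : AEStronglyMeasurable f'' (volume.restrict (Ioc a b)) :=
    hint.1.aestronglyMeasurable
  have hleft := abs_integral_sub_sq_mul_le hpq' ham (.inl rfl)
    (hmeas.mono_measure (Measure.restrict_mono (Ioc_subset_Ioc_right hmb) le_rfl))
    (hconvOn.subset (Icc_subset_Icc_right hmb) (convex_Icc a m))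
  have hright := abs_integral_sub_sq_mul_le hpq' hmb (.inr rfl)
    (hmeas.mono_measure (Measure.restrict_mono (Ioc_subset_Ioc_left ham) le_rfl))
    (hconvOn.subset (Icc_subset_Icc_left ham) (convex_Icc m b))
  rw [add_comm (|f'' a| ^ q), show m - a = (b - a) / 2 by linarith] at hleft
  rw [show b - m = (b - a) / 2 by linarith] at hright
  rw [midpoint_sub_average_eq hab hf' hf'' hint, abs_div, abs_neg,
    abs_of_pos (by linarith : (0 : ℝ) < 2 * (b - a))]
  calc _ ≤ (|∫ x in a..m, (x - a) ^ 2 * f'' x| + |∫ x in m..b, (x - b) ^ 2 * f'' x|) /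
        (2 * (b - a)) := by
        gcongr
        exact abs_add_le _ _
    _ ≤ _ := by
        rw [div_le_iff₀ (by linarith)]
        refine (add_le_add hleft hright).trans_eq ?_
        ring
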